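/- Let d ≥ 1, α > 0, and 0 < ε < α, and let X ⊆ S^d be a finite (ε/2)-net of S^d. Then for every finite set Y ⊆ S^d, the chromatic number of the exact distance graph D_{Y,0}(α) (distinct points of Y adjacent iff their geodesic distance equals α) is at most the chromatic number of the ε-distance graph D_{X,ε}(α). -/

import Mathlib

open scoped RealInnerProductSpace

/-- Geodesic distance `arccos ⟨x, y⟩` on the unit sphere in `ℝ^n`. -/
noncomputable def gd {n : ℕ} (x y : EuclideanSpace ℝ (Fin n)) : ℝ :=
  Real.arccos (inner ℝ x y : ℝ)

lemma gd_comm {n : ℕ} (x y : EuclideanSpace ℝ (Fin n)) : gd x y = gd y x := by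
  rw [gd, gd, real_inner_comm]

/-- The unit sphere `S^d ⊆ ℝ^{d+1}`. -/
noncomputable def unitSphere (d : ℕ) : Set (EuclideanSpace ℝ (Fin (d + 1))) :=
  Metric.sphere 0 1

/-- `X` is an `r`-net of `S^d`: every point of the sphere is within geodesic
distance `r` of a point of `X`. -/
def IsNet (d : ℕ) (r : ℝ) (X : Set (EuclideanSpace ℝ (Fin (d + 1)))) : Prop :=
  ∀ y ∈ unitSphere d, ∃ x ∈ X, gd x y ≤ r

/-- The ε-distance graph with parameter α on a set `X ⊆ ℝ^n`: distinct points are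
adjacent iff their geodesic distance lies in `[α - ε, α + ε]`. -/
noncomputable def distGraph {n : ℕ} (X : Set (EuclideanSpace ℝ (Fin n))) (α ε : ℝ) :
    SimpleGraph X where
  Adj x y := x ≠ y ∧ α - ε ≤ gd x.1 y.1 ∧ gd x.1 y.1 ≤ α + ε
  symm := by
    constructor
    intro x y h
    exact ⟨h.1.symm, by rw [gd_comm]; exact h.2.1, by rw [gd_comm]; exact h.2.2⟩
  loopless := ⟨fun x h => h.1 rfl⟩

/-! Moving each point of `Y` to a net point at geodesic distance at most `ε / 2` changes
every distance by at most `ε` (spherical triangle inequality), so it maps `D_{Y,δ}(α)`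
homomorphically into `D_{X,δ+ε}(α)`; the images of adjacent points stay distinct because
their distance is at least `α - δ - ε > 0`. -/

open InnerProductGeometry

variable {n : ℕ}

lemma gd_eq_angle {x y : EuclideanSpace ℝ (Fin n)} (hx : ‖x‖ = 1) (hy : ‖y‖ = 1) :
    gd x y = angle x y := by
  simp [gd, angle, hx, hy]

lemma gd_self {x : EuclideanSpace ℝ (Fin n)} (hx : ‖x‖ = 1) : gd x x = 0 := by
  rw [gd_eq_angle hx hx, angle_self (norm_ne_zero_iff.mp (by simp [hx]))]

lemma gd_le_gd_add_gd {x y z : EuclideanSpace ℝ (Fin n)} (hx : ‖x‖ = 1) (hy : ‖y‖ = 1)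
    (hz : ‖z‖ = 1) : gd x z ≤ gd x y + gd y z := by
  rw [gd_eq_angle hx hz, gd_eq_angle hx hy, gd_eq_angle hy hz]
  exact angle_le_angle_add_angle x y z

lemma abs_gd_sub_gd_le {a b a' b' : EuclideanSpace ℝ (Fin n)} (ha : ‖a‖ = 1) (hb : ‖b‖ = 1)
    (ha' : ‖a'‖ = 1) (hb' : ‖b'‖ = 1) : |gd a' b' - gd a b| ≤ gd a' a + gd b' b := by
  have h₁ := gd_le_gd_add_gd ha' ha hb'
  have h₂ := gd_le_gd_add_gd ha hb hb'
  have h₃ := gd_le_gd_add_gd ha ha' hb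
  have h₄ := gd_le_gd_add_gd ha' hb' hb
  rw [gd_comm b b'] at h₂
  rw [gd_comm a a'] at h₃
  rw [abs_sub_le_iff]
  constructor <;> linarith

noncomputable def distGraphHomOfGdLe {X Y : Set (EuclideanSpace ℝ (Fin n))}
    (hX : ∀ x ∈ X, ‖x‖ = 1) (hY : ∀ y ∈ Y, ‖y‖ = 1) {α δ ε : ℝ} (hα : δ + ε < α)
    (f : Y → X) (hf : ∀ y, gd (f y : EuclideanSpace ℝ (Fin n)) y ≤ ε / 2) :
    distGraph Y α δ →g distGraph X α (δ + ε) where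
  toFun := f
  map_rel' := by
    rintro a b ⟨-, hlo, hhi⟩
    have hmove := abs_le.mp (abs_gd_sub_gd_le (hY a a.2) (hY b b.2) (hX _ (f a).2)
      (hX _ (f b).2))
    have hfa := hf a
    have hfb := hf b
    have hlo' : α - (δ + ε) ≤ gd (f a : EuclideanSpace ℝ (Fin n)) (f b) := by linarith
    refine ⟨fun hab => ?_, hlo', by linarith⟩
    rw [hab, gd_self (hX _ (f b).2)] at hlo'
    linarith

theorem chromaticNumber_distGraph_le_of_forall_exists_gd_le
    {X Y : Set (EuclideanSpace ℝ (Fin n))} (hX : ∀ x ∈ X, ‖x‖ = 1) (hY : ∀ y ∈ Y, ‖y‖ = 1)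
    {α δ ε : ℝ} (hα : δ + ε < α) (hnet : ∀ y ∈ Y, ∃ x ∈ X, gd x y ≤ ε / 2) :
    (distGraph Y α δ).chromaticNumber ≤ (distGraph X α (δ + ε)).chromaticNumber := by
  choose f hfX hf using hnet
  exact SimpleGraph.chromaticNumber_mono_of_hom <|
    distGraphHomOfGdLe hX hY hα (fun y => ⟨f y y.2, hfX y y.2⟩) fun y => hf y y.2

lemma norm_eq_one_of_mem_unitSphere {d : ℕ} {x : EuclideanSpace ℝ (Fin (d + 1))}
    (hx : x ∈ unitSphere d) : ‖x‖ = 1 := by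
  simpa [unitSphere] using hx

theorem stmt_5_general (d : ℕ) (α ε : ℝ) (hεα : ε < α)
    (X : Set (EuclideanSpace ℝ (Fin (d + 1)))) (hXS : X ⊆ unitSphere d)
    (hnet : IsNet d (ε / 2) X)
    (Y : Set (EuclideanSpace ℝ (Fin (d + 1)))) (hYS : Y ⊆ unitSphere d) :
    (distGraph Y α 0).chromaticNumber ≤ (distGraph X α ε).chromaticNumber := by
  simpa using chromaticNumber_distGraph_le_of_forall_exists_gd_le (δ := 0)
    (fun x hx => norm_eq_one_of_mem_unitSphere (hXS hx))
    (fun y hy => norm_eq_one_of_mem_unitSphere (hYS hy))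
    (by linarith) fun y hy => hnet y (hYS hy)

/-- any finite subgraph of the exact distance graph has chromatic number at most
that of the ε-distance graph on a finite `(ε/2)`-net. -/
theorem stmt_5 (d : ℕ) (hd : 1 ≤ d) (α ε : ℝ) (hα : 0 < α) (hε0 : 0 < ε) (hεα : ε < α)
    (X : Set (EuclideanSpace ℝ (Fin (d + 1)))) (hXS : X ⊆ unitSphere d)
    (hXfin : X.Finite) (hnet : IsNet d (ε / 2) X)
    (Y : Set (EuclideanSpace ℝ (Fin (d + 1)))) (hYS : Y ⊆ unitSphere d) (hYfin : Y.Finite) :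
    (distGraph Y α 0).chromaticNumber ≤ (distGraph X α ε).chromaticNumber :=
  stmt_5_general d α ε hεα X hXS hnet Y hYS
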